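/- arXiv:1509.03354 — 7 statements merged into one kernel-verified Lean document; each statement's English description precedes it below -/
import Mathlib

section
/- Let $T$ be an entire semiring and let $\deg$ be the degree map on the Laurent polynomial semiring $T[X][X^{-1}]$ (with $\deg(0) = -\infty$ convention replaced by $+\infty$). Then $\deg(f+g) \geq \min\{\deg(f), \deg(g)\}$ holds for all $f, g \in T[X][X^{-1}]$ if and only if $T$ is zerosumfree. -/
open Classical in
/-- The (top) degree of a Laurent polynomial, with `deg 0 = +∞`. -/
noncomputable def ldeg {T : Type*} [CommSemiring T]
    (f : LaurentPolynomial T) : WithTop ℤ :=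
  if h : f = 0 then ⊤
  else ((f.coeff.support.max' (Finsupp.support_nonempty_iff.mpr (mt AddMonoidAlgebra.coeff_eq_zero.mp h)) : ℤ) : WithTop ℤ)

-- auxiliary Finsupp-level lemmas

lemma aux_support_subset {T : Type*} [AddCommMonoid T]
    (hz : ∀ a b : T, a + b = 0 → a = 0 ∧ b = 0) (f g : ℤ →₀ T) :
    f.support ⊆ (f + g).support := by
  intro n hn
  rw [Finsupp.mem_support_iff] at hn ⊢
  rw [Finsupp.add_apply]
  intro h
  exact hn (hz _ _ h).1

lemma aux_ne_zero {T : Type*} [AddCommMonoid T]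
    (hz : ∀ a b : T, a + b = 0 → a = 0 ∧ b = 0) (f g : ℤ →₀ T)
    (hf : f ≠ 0) : f + g ≠ 0 := by
  intro h
  apply hf
  ext n
  have := Finsupp.ext_iff.mp h n
  rw [Finsupp.add_apply] at this
  exact (hz _ _ this).1

lemma aux_sum_single {T : Type*} [AddCommMonoid T] [One T] (a b : T) (hab : a + b = 0) :
    ((Finsupp.single 1 a + Finsupp.single 0 1) + Finsupp.single 1 b : ℤ →₀ T)
      = Finsupp.single 0 1 := by
  rw [add_right_comm, ← Finsupp.single_add, hab, Finsupp.single_zero, zero_add]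

lemma aux_f_ne_zero {T : Type*} [AddCommMonoid T] [One T] (a : T) (ha : a ≠ 0) :
    ((Finsupp.single 1 a + Finsupp.single 0 1) : ℤ →₀ T) ≠ 0 := by
  intro h
  have := Finsupp.ext_iff.mp h 1
  simp [Finsupp.add_apply, Finsupp.single_apply] at this
  exact ha this

lemma aux_f_support {T : Type*} [AddCommMonoid T] [One T] [NeZero (1 : T)]
    (a : T) (ha : a ≠ 0) :
    ((Finsupp.single 1 a + Finsupp.single 0 1) : ℤ →₀ T).support = {1, 0} := by
  rw [Finsupp.support_add_eq]
  · rw [Finsupp.support_single_ne_zero _ ha,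
      Finsupp.support_single_ne_zero _ (NeZero.ne' (1:T)).symm]
    rfl
  · rw [Finsupp.support_single_ne_zero _ ha,
      Finsupp.support_single_ne_zero _ (NeZero.ne' (1:T)).symm]
    simp

lemma ldeg_single {T : Type*} [CommSemiring T] (n : ℤ) (a : T) (ha : a ≠ 0) :
    ldeg (AddMonoidAlgebra.ofCoeff (Finsupp.single n a) : LaurentPolynomial T) = (n : WithTop ℤ) := by
  have h0 : (AddMonoidAlgebra.ofCoeff (Finsupp.single n a) : LaurentPolynomial T) ≠ 0 := by
    rw [Ne, AddMonoidAlgebra.ofCoeff_eq_zero, Finsupp.single_eq_zero]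
    exact ha
  rw [ldeg, dif_neg h0]
  congr 1
  have hs : (AddMonoidAlgebra.ofCoeff (Finsupp.single n a) : LaurentPolynomial T).coeff.support = {n} :=
    Finsupp.support_single_ne_zero n ha
  apply le_antisymm
  · apply Finset.max'_le
    intro y hy
    rw [hs, Finset.mem_singleton] at hy
    exact le_of_eq hy
  · apply Finset.le_max'
    rw [hs]; exact Finset.mem_singleton_self n

/-- For an entire semiring `T`, the degree map on `T[X][X⁻¹]`
satisfies `deg (f + g) ≥ min (deg f) (deg g)` for all `f, g` iff `T` is
zerosumfree. -/
theorem stmt_6 {T : Type*} [CommSemiring T] [Nontrivial T]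
    (hentire : ∀ a b : T, a * b = 0 → a = 0 ∨ b = 0) :
    (∀ f g : LaurentPolynomial T, min (ldeg f) (ldeg g) ≤ ldeg (f + g)) ↔
      (∀ a b : T, a + b = 0 → a = 0 ∧ b = 0) := by
  constructor
  · intro hdeg a b hab
    by_contra hcon
    have ha : a ≠ 0 := by
      rintro rfl
      simp only [zero_add] at hab
      exact hcon ⟨rfl, hab⟩
    have hb : b ≠ 0 := by
      rintro rfl
      simp only [add_zero] at hab
      exact hcon ⟨hab, rfl⟩
    set f : LaurentPolynomial T := AddMonoidAlgebra.ofCoeff ((Finsupp.single 1 a + Finsupp.single 0 1 : ℤ →₀ T)) with hf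
    set g : LaurentPolynomial T := AddMonoidAlgebra.ofCoeff (Finsupp.single 1 b : ℤ →₀ T) with hg
    have hfg : f + g = AddMonoidAlgebra.ofCoeff (Finsupp.single 0 1 : ℤ →₀ T) := congrArg AddMonoidAlgebra.ofCoeff (aux_sum_single a b hab)
    have hdf : ldeg f = (1 : ℤ) := by
      have hne : f ≠ 0 := AddMonoidAlgebra.ofCoeff_eq_zero.not.mpr (aux_f_ne_zero a ha)
      rw [ldeg, dif_neg hne]
      have hsupp : f.coeff.support = ({1, 0} : Finset ℤ) := aux_f_support a ha
      congr 1
      apply le_antisymm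
      · apply Finset.max'_le
        intro y hy
        rw [hsupp] at hy
        simp at hy
        rcases hy with rfl | rfl <;> norm_num
      · apply Finset.le_max'
        rw [hsupp]; simp
    have hdg : ldeg g = (1 : ℤ) := ldeg_single 1 b hb
    have hds : ldeg (f + g) = (0 : ℤ) := by
      rw [hfg]; exact ldeg_single 0 1 one_ne_zero
    have := hdeg f g
    rw [hdf, hdg, hds, min_self] at this
    exact absurd this (by norm_num)
  · intro hz f g
    by_cases hf : f = 0
    · subst hf
      rw [zero_add]
      exact min_le_right _ _
    by_cases hg : g = 0
    · subst hg
      rw [add_zero]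
      exact min_le_left _ _
    have hfg : f + g ≠ 0 := fun h => aux_ne_zero hz f.coeff g.coeff (mt AddMonoidAlgebra.coeff_eq_zero.mp hf) (by have := congrArg AddMonoidAlgebra.coeff h; exact this)
    have hsub : f.coeff.support ⊆ (f + g).coeff.support := aux_support_subset hz f.coeff g.coeff
    have hle : ldeg f ≤ ldeg (f + g) := by
      rw [ldeg, dif_neg hf, ldeg, dif_neg hfg]
      exact_mod_cast Finset.max'_subset _ hsub
    exact le_trans (min_le_left _ _) hle
end

section
/- Let $K$ be a semifield, $M$ a tomonoid, and $v$ a surjective $M$-valuation on $K$, with $S_v = \{x \in K : v(x) \geq 0\}$ and $P_v = \{x \in S_v : v(x) > 0\}$. Then the following are equivalent: (1) $v$ has the min-property; (2) for each $\alpha \geq 0$ in $M$, the ideal $I_\alpha = \{x \in S_v : v(x) > \alpha\}$ is subtractive; (3) $P_v$ is subtractive. -/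
/-- For a surjective `M`-valuation `v` on a semifield `K`, with
`S_v = {x | v x ≥ 0}`, TFAE: (1) `v` has the min-property; (2) for each
`α ≥ 0` in `M`, the ideal `I_α = {x ∈ S_v | v x > α}` of `S_v` is subtractive;
(3) the ideal `P_v = {x ∈ S_v | v x > 0}` is subtractive. -/
theorem stmt_9 {K M : Type*} [Semifield K]
    [AddCommMonoid M] [LinearOrder M] [IsOrderedAddMonoid M] [NoMaxOrder M]
    (v : K → WithTop M)
    (hv_mul : ∀ x y : K, v (x * y) = v x + v y)
    (hv_add : ∀ x y : K, min (v x) (v y) ≤ v (x + y))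
    (hv_one : v 1 = 0)
    (hv_zero : v 0 = ⊤)
    (hsurj : Function.Surjective v) :
    List.TFAE
      [ -- (1) `v` has the min-property:
        ∀ x y : K, v x ≠ v y → v (x + y) = min (v x) (v y),
        -- (2) each `I_α` (`α ≥ 0`) is a subtractive ideal of `S_v`:
        ∀ α : M, 0 ≤ α → ∀ a b : K, 0 ≤ v a → 0 ≤ v b →
          (α : WithTop M) < v (a + b) → (α : WithTop M) < v a →
          (α : WithTop M) < v b,
        -- (3) the maximal ideal `P_v` is subtractive:
        ∀ a b : K, 0 ≤ v a → 0 ≤ v b → 0 < v (a + b) → 0 < v a → 0 < v b ] := by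
  tfae_have 1 → 2
  · intro h1 α hα a b ha hb hab hva
    by_contra hvb
    push_neg at hvb
    have hne : v a ≠ v b := (lt_of_le_of_lt hvb hva).ne'
    rw [h1 a b hne] at hab
    exact absurd (lt_of_lt_of_le hab (min_le_right _ _)) (not_lt.2 hvb)
  tfae_have 2 → 3
  · intro h2 a b ha hb hab hva
    have := h2 0 le_rfl a b ha hb (by simpa using hab) (by simpa using hva)
    simpa using this
  tfae_have 3 → 1
  · intro h3 x y hne
    have key : ∀ x y : K, v x < v y → ¬ v x < v (x + y) := by
      intro x y hxy hsum
      have hx0 : x ≠ 0 := by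
        intro h; rw [h, hv_zero] at hxy; exact not_top_lt hxy
      set u := x⁻¹ with hu
      have hux : v u + v x = 0 := by
        rw [← hv_mul, inv_mul_cancel₀ hx0, hv_one]
      have cancel : ∀ w : K, v x < v w → 0 < v (u * w) := by
        intro w hw
        by_contra hle
        push_neg at hle
        rw [hv_mul] at hle
        have h2 : v x + (v u + v w) ≤ v x + 0 := add_le_add le_rfl hle
        rw [← add_assoc, add_comm (v x) (v u), hux, zero_add, add_zero] at h2
        exact absurd hw (not_lt.2 h2)
      have hvux : v (u * x) = 0 := by rw [hv_mul, hux]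
      have ha : 0 < v (u * y) := cancel y hxy
      have hb : 0 < v (u * y + u * x) := by
        rw [add_comm, ← mul_add]; exact cancel (x + y) hsum
      have := h3 (u * y) (u * x) ha.le (le_of_eq hvux.symm) hb ha
      rw [hvux] at this
      exact lt_irrefl _ this
    rcases hne.lt_or_gt with h | h
    · rw [min_eq_left h.le]
      exact le_antisymm (not_lt.1 (key x y h))
        (by simpa [min_eq_left h.le] using hv_add x y)
    · rw [min_eq_right h.le, add_comm x y]
      exact le_antisymm (not_lt.1 (key y x h))
        (by simpa [min_eq_left h.le] using hv_add y x)
  tfae_finish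
end

section
/- Let $S$ be a valuation semiring whose unique maximal ideal $J$ is subtractive. Then $S$ is integrally closed: every element of $F(S)$ integral over $S$ lies in $S$. -/
/-- Let `S = {x ∈ K | v x ≥ 0}` be a valuation semiring (for a
surjective `M`-valuation `v` on a semifield `K`) whose unique maximal ideal `J`
is subtractive.  Then `S` is integrally closed: every element of the semifield
of fractions `K` integral over `S` lies in `S`. -/
theorem stmt_14 {K M : Type*} [Semifield K]
    [AddCommMonoid M] [LinearOrder M] [IsOrderedAddMonoid M] [NoMaxOrder M]
    (v : K → WithTop M)
    (hv_mul : ∀ x y : K, v (x * y) = v x + v y)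
    (hv_add : ∀ x y : K, min (v x) (v y) ≤ v (x + y))
    (hv_one : v 1 = 0)
    (hv_zero : v 0 = ⊤)
    (hsurj : Function.Surjective v)
    (S : Subsemiring K) (hS : (S : Set K) = {x : K | 0 ≤ v x})
    -- `J` is the unique maximal ideal of `S` ...
    (J : Ideal S) (hJmax : J.IsMaximal)
    (hJuniq : ∀ J' : Ideal S, J'.IsMaximal → J' = J)
    -- ... and it is subtractive:
    (hJsub : ∀ a b : S, a + b ∈ J → a ∈ J → b ∈ J) :
    -- every `u ∈ K` integral over `S` lies in `S`:
    ∀ u : K,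
      (∃ n : ℕ, 0 < n ∧ ∃ a b : Fin n → S,
        u ^ n + ∑ i : Fin n, (a i : K) * u ^ (n - 1 - (i : ℕ)) =
          ∑ i : Fin n, (b i : K) * u ^ (n - 1 - (i : ℕ))) →
      u ∈ S := by
  rintro u ⟨n, hn, a, b, heq⟩
  by_contra hu
  have hmem : ∀ x : K, x ∈ S ↔ 0 ≤ v x := fun x => by
    rw [← SetLike.mem_coe, hS]; rfl
  have hvu : v u < 0 := lt_of_not_ge (fun h => hu ((hmem u).2 h))
  have hu0 : u ≠ 0 := by
    rintro rfl
    rw [hv_zero] at hvu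
    exact absurd hvu (not_lt.2 le_top)
  have hvinv : 0 < v u⁻¹ := by
    by_contra h
    push_neg at h
    have h0 : v u + v u⁻¹ = 0 := by
      rw [← hv_mul, mul_inv_cancel₀ hu0, hv_one]
    have hlt : v u + v u⁻¹ < 0 := by
      calc v u + v u⁻¹ ≤ v u + 0 := add_le_add_right h _
        _ = v u := add_zero _
        _ < 0 := hvu
    exact absurd h0 (ne_of_lt hlt)
  have hwS : u⁻¹ ∈ S := (hmem _).2 hvinv.le
  set w : S := ⟨u⁻¹, hwS⟩ with hw
  -- the ideal of elements of positive valuation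
  have hvpos : ∀ x : S, 0 ≤ v (x : K) := fun x => (hmem _).1 x.2
  let P : Ideal S :=
    { carrier := {x : S | 0 < v (x : K)}
      zero_mem' := by
        show (0 : WithTop M) < v ((0 : S) : K)
        rw [Subsemiring.coe_zero, hv_zero]
        exact lt_of_le_of_ne le_top (by simp)
      add_mem' := by
        intro x y hx hy
        show (0 : WithTop M) < v ((x + y : S) : K)
        rw [Subsemiring.coe_add]
        exact lt_of_lt_of_le (lt_min hx hy) (hv_add _ _)
      smul_mem' := by
        intro c x hx
        show (0 : WithTop M) < v ((c * x : S) : K)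
        rw [Subsemiring.coe_mul, hv_mul]
        exact lt_of_lt_of_le hx (le_add_of_nonneg_left (hvpos c)) }
  have hPtop : P ≠ ⊤ := by
    intro h
    have h1 : (1 : S) ∈ P := h ▸ Submodule.mem_top
    have : (0 : WithTop M) < v ((1 : S) : K) := h1
    rw [Subsemiring.coe_one, hv_one] at this
    exact lt_irrefl _ this
  obtain ⟨M', hM', hPM'⟩ := Ideal.exists_le_maximal P hPtop
  rw [hJuniq M' hM'] at hPM'
  have hwJ : w ∈ J := hPM' (show (0 : WithTop M) < v (w : K) from hvinv)
  set A : S := ∑ i : Fin n, a i * w ^ ((i : ℕ) + 1) with hA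
  set B : S := ∑ i : Fin n, b i * w ^ ((i : ℕ) + 1) with hB
  have hAJ : A ∈ J := Ideal.sum_mem _ fun i _ =>
    Ideal.mul_mem_left _ _ (Ideal.pow_mem_of_mem _ hwJ _ (Nat.succ_pos _))
  have hBJ : B ∈ J := Ideal.sum_mem _ fun i _ =>
    Ideal.mul_mem_left _ _ (Ideal.pow_mem_of_mem _ hwJ _ (Nat.succ_pos _))
  -- key power identity
  have key : ∀ i : Fin n, u ^ (n - 1 - (i : ℕ)) * (u⁻¹) ^ n = (u⁻¹) ^ ((i : ℕ) + 1) := by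
    intro i
    have hi : (i : ℕ) < n := i.2
    have h1 : n - 1 - (i : ℕ) ≤ n := by omega
    have h2 : n - (n - 1 - (i : ℕ)) = (i : ℕ) + 1 := by omega
    have := pow_sub₀ (a := u⁻¹) (inv_ne_zero hu0) h1
    rw [h2] at this
    rw [this, inv_pow u (n - 1 - (i : ℕ)), inv_inv, mul_comm]
  have hK : (1 : K) + ∑ i : Fin n, (a i : K) * (u⁻¹) ^ ((i : ℕ) + 1) =
      ∑ i : Fin n, (b i : K) * (u⁻¹) ^ ((i : ℕ) + 1) := by
    have h := congrArg (· * (u⁻¹) ^ n) heq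
    simp only [add_mul, Finset.sum_mul] at h
    rw [show u ^ n * (u⁻¹) ^ n = 1 by rw [← mul_pow, mul_inv_cancel₀ hu0, one_pow]] at h
    calc (1 : K) + ∑ i : Fin n, (a i : K) * (u⁻¹) ^ ((i : ℕ) + 1)
        = 1 + ∑ i : Fin n, (a i : K) * u ^ (n - 1 - (i : ℕ)) * (u⁻¹) ^ n := by
          refine congrArg _ (Finset.sum_congr rfl fun i _ => ?_)
          rw [mul_assoc, key i]
      _ = ∑ i : Fin n, (b i : K) * u ^ (n - 1 - (i : ℕ)) * (u⁻¹) ^ n := h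
      _ = ∑ i : Fin n, (b i : K) * (u⁻¹) ^ ((i : ℕ) + 1) := by
          refine Finset.sum_congr rfl fun i _ => ?_
          rw [mul_assoc, key i]
  have hSeq : (1 : S) + A = B := by
    apply Subtype.ext
    push_cast [hA, hB]
    exact hK
  have h1J : (1 : S) ∈ J := hJsub A 1 (by rwa [add_comm A 1, hSeq]) hAJ
  exact hJmax.ne_top ((Ideal.eq_top_iff_one J).2 h1J)
end

section
/- Let $S$ be a multiplicatively cancellative semiring satisfying the ascending chain condition on principal ideals (ACCP). Then $t \in S$ is a nonunit if and only if $\bigcap_{n=1}^\infty (t^n) = (0)$. -/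
/-- In a multiplicatively cancellative semiring satisfying ACCP,
`t` is a nonunit iff `⋂_{n ≥ 1} (tⁿ) = (0)`. -/
theorem stmt_15 {S : Type*} [CommSemiring S] [Nontrivial S]
    (hMC : ∀ a b c : S, a ≠ 0 → a * b = a * c → b = c)
    -- ACCP: every ascending chain `(f 0) ⊆ (f 1) ⊆ ⋯` of principal ideals is
    -- eventually stationary:
    (hACCP : ∀ f : ℕ → S, (∀ n : ℕ, f (n + 1) ∣ f n) →
      ∃ N : ℕ, ∀ n : ℕ, N ≤ n → f N ∣ f n)
    (t : S) :
    ¬ IsUnit t ↔ {s : S | ∀ n : ℕ, 1 ≤ n → t ^ n ∣ s} = {0} := by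
  constructor
  · intro ht
    ext s
    simp only [Set.mem_setOf_eq, Set.mem_singleton_iff]
    constructor
    · intro hs
      by_contra hs0
      by_cases ht0 : t = 0
      · exact hs0 (zero_dvd_iff.mp (by simpa [ht0] using hs 1 le_rfl))
      have hdvd : ∀ n : ℕ, t ^ (n + 1) ∣ s := fun n => hs (n + 1) (Nat.succ_le_succ (Nat.zero_le n))
      choose c hc using hdvd
      have htpow : ∀ n : ℕ, t ^ (n + 1) ≠ 0 := by
        intro n
        induction n with
        | zero => simpa using ht0
        | succ k ih =>
          intro h
          apply ht0
          apply hMC (t ^ (k + 1)) t 0 ih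
          rw [mul_zero, mul_comm, ← pow_succ']
          exact h
      have hstep : ∀ n, c n = t * c (n + 1) := by
        intro n
        apply hMC (t ^ (n + 1)) _ _ (htpow n)
        rw [← hc n]
        calc s = t ^ (n + 2) * c (n + 1) := hc (n + 1)
          _ = t ^ (n + 1) * (t * c (n + 1)) := by ring
      have hchain : ∀ n, c (n + 1) ∣ c n := fun n => ⟨t, by rw [hstep n]; ring⟩
      obtain ⟨N, hN⟩ := hACCP c hchain
      obtain ⟨d, hd⟩ := hN (N + 1) (Nat.le_succ N)
      have hcN0 : c (N + 1) ≠ 0 := by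
        intro h
        apply hs0
        rw [hc (N + 1), h, mul_zero]
      have : c (N + 1) * 1 = c (N + 1) * (t * d) := by
        rw [mul_one]
        calc c (N + 1) = c N * d := hd
          _ = t * c (N + 1) * d := by rw [hstep N]
          _ = c (N + 1) * (t * d) := by ring
      exact ht ⟨⟨t, d, (hMC _ _ _ hcN0 this).symm, by
        rw [mul_comm]; exact (hMC _ _ _ hcN0 this).symm⟩, rfl⟩
    · rintro rfl
      exact fun n _ => dvd_zero _
  · intro h hu
    have h1 : (1 : S) ∈ {s : S | ∀ n : ℕ, 1 ≤ n → t ^ n ∣ s} :=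
      fun n _ => (hu.pow n).dvd
    rw [h] at h1
    exact one_ne_zero h1
end

section
/- If $S$ is a discrete valuation semiring, then there exists a nonzero nonunit $t \in S$ such that every nonzero ideal of $S$ equals $(t^n)$ for some $n \geq 0$. -/
/-- If `S = {x ∈ K | v x ≥ 0}` is a discrete valuation semiring
(for a surjective `ℤ`-valuation `v` on a semifield `K`), then there is a
nonzero nonunit `t ∈ S` such that every nonzero ideal of `S` equals `(tⁿ)`
for some `n ≥ 0`. -/
theorem stmt_16 {K : Type*} [Semifield K]
    (v : K → WithTop ℤ)
    (hv_mul : ∀ x y : K, v (x * y) = v x + v y)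
    (hv_add : ∀ x y : K, min (v x) (v y) ≤ v (x + y))
    (hv_one : v 1 = 0)
    (hv_zero : v 0 = ⊤)
    (hsurj : Function.Surjective v)
    (S : Subsemiring K) (hS : (S : Set K) = {x : K | 0 ≤ v x}) :
    ∃ t : S, t ≠ 0 ∧ ¬ IsUnit t ∧
      ∀ I : Ideal S, I ≠ ⊥ → ∃ n : ℕ, I = Ideal.span {t ^ n} := by
  classical
  have hmem : ∀ x : K, x ∈ S ↔ 0 ≤ v x := fun x => by
    rw [← SetLike.mem_coe, hS]; exact Iff.rfl
  have hne_top : ∀ x : K, x ≠ 0 → v x ≠ ⊤ := by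
    intro x hx h
    have h1 : v (x * x⁻¹) = v x + v x⁻¹ := hv_mul x x⁻¹
    rw [mul_inv_cancel₀ hx, hv_one, h] at h1
    simp at h1
  have hv_inv : ∀ (x : K) (a : ℤ), v x = (a : ℤ) → v x⁻¹ = ((-a : ℤ) : WithTop ℤ) := by
    intro x a hx
    have hx0 : x ≠ 0 := by
      intro h; rw [h, hv_zero] at hx; exact (WithTop.coe_ne_top hx.symm).elim
    have h1 : v x + v x⁻¹ = 0 := by rw [← hv_mul, mul_inv_cancel₀ hx0, hv_one]
    have h2 : v x⁻¹ ≠ ⊤ := by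
      intro h; rw [h, hx] at h1; simp at h1
    obtain ⟨b, hb⟩ := WithTop.ne_top_iff_exists.mp h2
    rw [hx, ← hb] at h1
    rw [← hb]
    norm_cast at h1 ⊢
    omega
  obtain ⟨tk, htk⟩ := hsurj ((1 : ℤ) : WithTop ℤ)
  have htkS : tk ∈ S := (hmem tk).mpr (by rw [htk]; exact_mod_cast zero_le_one)
  have htkne : tk ≠ 0 := by
    intro h; rw [h, hv_zero] at htk; simp at htk
  have htn : ∀ m : ℕ, v (tk ^ m) = ((m : ℤ) : WithTop ℤ) := by
    intro m; induction m with
    | zero => simpa using hv_one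
    | succ k ih => rw [pow_succ, hv_mul, ih, htk]; norm_cast
  refine ⟨⟨tk, htkS⟩, ?_, ?_, ?_⟩
  · intro h
    have h0 : tk = 0 := congrArg Subtype.val h
    exact htkne h0
  · intro h
    obtain ⟨u, hu⟩ := h
    have h1 : ((u : S) : K) * (((u⁻¹ : Sˣ) : S) : K) = 1 := by
      exact_mod_cast congrArg (Subtype.val) u.mul_inv
    have h2 : v ((u : S) : K) + v (((u⁻¹ : Sˣ) : S) : K) = 0 := by
      rw [← hv_mul, h1, hv_one]
    have h3 : v ((u : S) : K) = ((1 : ℤ) : WithTop ℤ) := by rw [hu]; exact htk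
    have h4 : 0 ≤ v (((u⁻¹ : Sˣ) : S) : K) := (hmem _).mp ((u⁻¹ : Sˣ) : S).2
    rw [h3] at h2
    have h5 : ((1 : ℤ) : WithTop ℤ) ≤ ((1 : ℤ) : WithTop ℤ) + v (((u⁻¹ : Sˣ) : S) : K) :=
      le_add_of_nonneg_right h4
    rw [h2] at h5
    exact absurd h5 (by exact_mod_cast (by norm_num : ¬ ((1:ℤ) ≤ 0)))
  · intro I hI
    obtain ⟨y0, hy0I, hy0⟩ := Submodule.ne_bot_iff I |>.mp hI
    have hP : ∃ m : ℕ, ∃ y : S, y ∈ I ∧ v (y : K) = ((m : ℤ) : WithTop ℤ) := by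
      have hy0ne : (y0 : K) ≠ 0 := fun h => hy0 (Subtype.ext h)
      obtain ⟨a, ha⟩ := WithTop.ne_top_iff_exists.mp (hne_top _ hy0ne)
      have hnn : 0 ≤ v (y0 : K) := (hmem _).mp y0.2
      have ha' : 0 ≤ a := by rw [← ha] at hnn; exact_mod_cast hnn
      exact ⟨a.toNat, y0, hy0I, by rw [← ha]; norm_cast; omega⟩
    set n := Nat.find hP with hn
    obtain ⟨x0, hx0I, hx0v⟩ := Nat.find_spec hP
    refine ⟨n, ?_⟩
    have hx0ne : (x0 : K) ≠ 0 := by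
      intro h; rw [h, hv_zero] at hx0v; simp at hx0v
    have hdvd : ∀ y : S, y ∈ I → ((⟨tk, htkS⟩ : S) ^ n) ∣ y := by
      intro y hyI
      by_cases hy : (y : K) = 0
      · have : y = 0 := Subtype.ext hy
        rw [this]; exact dvd_zero _
      obtain ⟨a, ha⟩ := WithTop.ne_top_iff_exists.mp (hne_top _ hy)
      have hnn : 0 ≤ v (y : K) := (hmem _).mp y.2
      have ha0 : 0 ≤ a := by rw [← ha] at hnn; exact_mod_cast hnn
      have han : (n : ℤ) ≤ a := by
        by_contra hlt
        push_neg at hlt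
        have hlt' : a.toNat < n := by omega
        exact Nat.find_min hP hlt' ⟨y, hyI, by rw [← ha]; norm_cast; omega⟩
      have hcv : v ((y : K) * (tk ^ n)⁻¹) = ((a - n : ℤ) : WithTop ℤ) := by
        rw [hv_mul, ← ha, hv_inv (tk ^ n) (n : ℤ) (htn n)]
        norm_cast
      have hcS : (y : K) * (tk ^ n)⁻¹ ∈ S := (hmem _).mpr (by
        rw [hcv]; exact_mod_cast (by omega : (0 : ℤ) ≤ a - n))
      refine ⟨⟨_, hcS⟩, ?_⟩
      apply Subtype.ext
      push_cast
      field_simp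
    have hdv : v ((tk ^ n) * (x0 : K)⁻¹) = ((0 : ℤ) : WithTop ℤ) := by
      rw [hv_mul, htn n, hv_inv _ (n : ℤ) hx0v]
      norm_cast
      omega
    have hdS : (tk ^ n) * (x0 : K)⁻¹ ∈ S := (hmem _).mpr (by rw [hdv]; norm_cast)
    have htnI : ((⟨tk, htkS⟩ : S) ^ n) ∈ I := by
      have heq : ((⟨tk, htkS⟩ : S) ^ n) = x0 * ⟨_, hdS⟩ := by
        apply Subtype.ext
        push_cast
        field_simp
      rw [heq]
      exact I.mul_mem_right _ hx0I
    apply le_antisymm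
    · intro y hy
      rw [Ideal.mem_span_singleton]
      exact hdvd y hy
    · rw [Ideal.span_le]
      simpa using htnI
end

section
/- Every discrete valuation semiring is a Euclidean semiring. -/
/-- Every discrete valuation semiring `S = {x ∈ K | v x ≥ 0}`
(for a surjective `ℤ`-valuation `v` on a semifield `K`) is a Euclidean
semiring. -/
theorem stmt_18 {K : Type*} [Semifield K]
    (v : K → WithTop ℤ)
    (hv_mul : ∀ x y : K, v (x * y) = v x + v y)
    (hv_add : ∀ x y : K, min (v x) (v y) ≤ v (x + y))
    (hv_one : v 1 = 0)
    (hv_zero : v 0 = ⊤)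
    (hsurj : Function.Surjective v)
    (S : Subsemiring K) (hS : (S : Set K) = {x : K | 0 ≤ v x}) :
    ∃ δ : S → ℕ∞, ∀ a b : S, b ≠ 0 →
      ∃ q r : S, a = q * b + r ∧ (r = 0 ∨ δ r < δ b) := by
  have hmem : ∀ x : K, x ∈ S ↔ 0 ≤ v x := fun x => by
    rw [← SetLike.mem_coe, hS]; rfl
  refine ⟨fun x => (v x.val).map Int.toNat, fun a b hb => ?_⟩
  have hbK : (b : K) ≠ 0 := fun h => hb (Subtype.ext h)
  have hva : 0 ≤ v (a : K) := (hmem a).1 a.2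
  have hvb : 0 ≤ v (b : K) := (hmem b).1 b.2
  have hinv : v (b : K) + v ((b : K)⁻¹) = 0 := by
    rw [← hv_mul, mul_inv_cancel₀ hbK, hv_one]
  have hbtop : v (b : K) ≠ ⊤ := by
    intro h; rw [h] at hinv; simp at hinv
  obtain ⟨n, hn⟩ := WithTop.ne_top_iff_exists.mp hbtop
  have hn0 : (0 : ℤ) ≤ n := by exact_mod_cast hn ▸ hvb
  have hbinv : v ((b : K)⁻¹) = ((-n : ℤ) : WithTop ℤ) := by
    rw [← hn] at hinv
    cases hx : v ((b : K)⁻¹) with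
    | top => rw [hx] at hinv; simp at hinv
    | coe m =>
      rw [hx] at hinv
      have : n + m = 0 := by exact_mod_cast hinv
      have : m = -n := by omega
      rw [this]
  by_cases hle : v (b : K) ≤ v (a : K)
  · have hq : (a : K) * (b : K)⁻¹ ∈ S := by
      rw [hmem, hv_mul, hbinv]
      cases hva' : v (a : K) with
      | top => simp
      | coe m =>
        rw [hva', ← hn] at hle
        have hm : n ≤ m := by exact_mod_cast hle
        have : ((m : WithTop ℤ)) + ((-n : ℤ) : WithTop ℤ) = ((m + -n : ℤ) : WithTop ℤ) := by
          exact_mod_cast rfl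
        rw [this]
        exact_mod_cast (by omega : (0:ℤ) ≤ m + -n)
    refine ⟨⟨_, hq⟩, 0, ?_, Or.inl rfl⟩
    apply Subtype.ext
    push_cast
    rw [add_zero, mul_assoc, inv_mul_cancel₀ hbK, mul_one]
  · push_neg at hle
    refine ⟨0, a, by simp, Or.inr ?_⟩
    have hatop : v (a : K) ≠ ⊤ := by
      intro h; rw [h, ← hn] at hle; exact absurd hle (by simp)
    obtain ⟨m, hm⟩ := WithTop.ne_top_iff_exists.mp hatop
    have hm0 : (0 : ℤ) ≤ m := by exact_mod_cast hm ▸ hva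
    have hmn : m < n := by
      rw [← hm, ← hn] at hle; exact_mod_cast hle
    simp only [← hm, ← hn, WithTop.map_coe]
    exact WithTop.coe_lt_coe.mpr (by exact_mod_cast (by omega : m.toNat < n.toNat))
end

section
/- Let $S$ be a discrete valuation semiring. The following are equivalent: (1) the unique maximal ideal of $S$ is subtractive; (2) the valuation map $v : F(S) \to \mathbb{Z}_\infty$ satisfies the min-property; (3) every ideal of $S$ is subtractive; (4) $S$ is a Gaussian semiring. -/
/-- The content of a polynomial over a commutative semiring: the ideal
generated by its coefficients. -/
def contentIdeal {R : Type*} [CommSemiring R] (f : Polynomial R) : Ideal R :=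
  Ideal.span {a : R | ∃ n : ℕ, f.coeff n = a}

section Aux
variable {K : Type*} [Semifield K] (v : K → WithTop ℤ)
  (hv_mul : ∀ x y : K, v (x * y) = v x + v y)
  (hv_add : ∀ x y : K, min (v x) (v y) ≤ v (x + y))
  (hv_one : v 1 = 0)
  (hv_zero : v 0 = ⊤)

lemma aux_add_one_le {a b : WithTop ℤ} (h : a < b) : a + 1 ≤ b := by
  induction b using WithTop.recTopCoe with
  | top => exact le_top
  | coe b =>
    lift a to ℤ using h.ne_top
    exact_mod_cast WithTop.coe_lt_coe.mp h

lemma aux_lt_add_one {a : WithTop ℤ} (ha : a ≠ ⊤) : a < a + 1 := by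
  lift a to ℤ using ha
  exact_mod_cast lt_add_one a

include hv_mul hv_one in
lemma aux_ne_top {x : K} (hx : x ≠ 0) : v x ≠ ⊤ := by
  intro h
  have := hv_mul x x⁻¹
  rw [mul_inv_cancel₀ hx, hv_one, h, top_add] at this
  exact (WithTop.zero_ne_top) this

include hv_add hv_zero in
lemma aux_sum_le {ι : Type*} (c : WithTop ℤ) (t : Finset ι) (F : ι → K)
    (h : ∀ i ∈ t, c ≤ v (F i)) : c ≤ v (∑ i ∈ t, F i) := by
  induction t using Finset.cons_induction with
  | empty => simpa [hv_zero] using le_top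
  | cons a s ha ih =>
    rw [Finset.sum_cons]
    refine le_trans ?_ (hv_add _ _)
    exact le_min (h a (Finset.mem_cons_self a s)) (ih fun i hi => h i (Finset.mem_cons_of_mem hi))

variable (S : Subsemiring K) (hS : (S : Set K) = {x : K | 0 ≤ v x})

include hS in
lemma aux_mem_iff (x : K) : x ∈ S ↔ 0 ≤ v x := by
  rw [← SetLike.mem_coe, hS]; rfl

include hv_mul hv_one hv_zero hS in
lemma aux_dvd (a b : S) (h : v ↑a ≤ v ↑b) : ∃ c : S, b = a * c := by
  by_cases ha : (a : K) = 0
  · have hb : v (b : K) = ⊤ := by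
      have := h; rw [ha, hv_zero] at this; exact top_le_iff.mp this
    have hb0 : (b : K) = 0 := by
      by_contra h0; exact aux_ne_top v hv_mul hv_one h0 hb
    exact ⟨0, by ext; simp [hb0]⟩
  · have hc : ((b : K) / a) * a = b := div_mul_cancel₀ _ ha
    have hvc : v ((b : K) / a) + v a = v b := by rw [← hv_mul, hc]
    have hcS : ((b : K) / a) ∈ S := by
      rw [aux_mem_iff v S hS]
      have hane : v (a : K) ≠ ⊤ := aux_ne_top v hv_mul hv_one ha
      have : 0 + v (a : K) ≤ v ((b : K) / a) + v a := by rw [zero_add, hvc]; exact h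
      exact (WithTop.add_le_add_iff_right hane).mp this
    refine ⟨⟨_, hcS⟩, ?_⟩
    ext
    push_cast
    rw [mul_comm, hc]

end Aux

section M
variable {K : Type*} [Semifield K] (v : K → WithTop ℤ)
  (hv_mul : ∀ x y : K, v (x * y) = v x + v y)
  (hv_add : ∀ x y : K, min (v x) (v y) ≤ v (x + y))
  (hv_one : v 1 = 0)
  (hv_zero : v 0 = ⊤)
  (S : Subsemiring K) (hS : (S : Set K) = {x : K | 0 ≤ v x})

def auxM (hv_mul : ∀ x y : K, v (x * y) = v x + v y)
    (hv_add : ∀ x y : K, min (v x) (v y) ≤ v (x + y))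
    (hv_zero : v 0 = ⊤)
    (S : Subsemiring K) (hS : (S : Set K) = {x : K | 0 ≤ v x}) : Ideal S where
  carrier := {s : S | 0 < v (s : K)}
  add_mem' := by
    intro a b ha hb
    have := hv_add (a : K) (b : K)
    have : 0 < v ((a : K) + b) := lt_of_lt_of_le (lt_min ha hb) this
    simpa using this
  zero_mem' := by simp [Set.mem_setOf_eq, hv_zero]
  smul_mem' := by
    intro c a ha
    have hc : 0 ≤ v (c : K) := by
      have := c.2; rw [← SetLike.mem_coe, hS] at this; exact this
    have h1 : (0:WithTop ℤ) + v (a : K) ≤ v (c : K) + v (a : K) := add_le_add hc le_rfl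
    rw [zero_add] at h1
    have : 0 < v ((c : K) * a) := by rw [hv_mul]; exact lt_of_lt_of_le ha h1
    simpa [Set.mem_setOf_eq] using this

lemma aux_mem_M (x : S) : x ∈ auxM v hv_mul hv_add hv_zero S hS ↔ 0 < v (x : K) := Iff.rfl

include hv_mul hv_one hv_zero hS in
lemma aux_eq_top {J : Ideal S} {x : S} (hx : x ∈ J) (hvx : v (x : K) = 0) : J = ⊤ := by
  have hx0 : (x : K) ≠ 0 := fun h => by simp [h, hv_zero] at hvx
  have hinv : v ((x : K)⁻¹) = 0 := by
    have := hv_mul (x : K) (x : K)⁻¹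
    rw [mul_inv_cancel₀ hx0, hv_one, hvx, zero_add] at this
    exact this.symm
  have hinvS : ((x : K)⁻¹) ∈ S := by
    rw [← SetLike.mem_coe, hS]; exact le_of_eq hinv.symm
  rw [Ideal.eq_top_iff_one]
  have : (⟨_, hinvS⟩ : S) * x ∈ J := J.mul_mem_left _ hx
  convert this using 1
  ext
  push_cast
  rw [inv_mul_cancel₀ hx0]

include hv_one in
lemma aux_M_maximal : (auxM v hv_mul hv_add hv_zero S hS).IsMaximal := by
  constructor
  constructor
  · intro h
    rw [Ideal.eq_top_iff_one] at h
    rw [aux_mem_M] at h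
    simp only [OneMemClass.coe_one, hv_one, lt_self_iff_false] at h
  · intro J hJ
    obtain ⟨x, hxJ, hxM⟩ := SetLike.exists_of_lt hJ
    rw [aux_mem_M, not_lt] at hxM
    have hx0 : 0 ≤ v (x : K) := by
      have := x.2; rw [← SetLike.mem_coe, hS] at this; exact this
    exact aux_eq_top v hv_mul hv_one hv_zero S hS hxJ (le_antisymm hxM hx0)

include hv_one in
lemma aux_M_unique (J : Ideal S) (hJ : J.IsMaximal) : J = auxM v hv_mul hv_add hv_zero S hS := by
  have hle : J ≤ auxM v hv_mul hv_add hv_zero S hS := by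
    intro x hx
    rw [aux_mem_M]
    by_contra h
    rw [not_lt] at h
    have hx0 : 0 ≤ v (x : K) := by
      have := x.2; rw [← SetLike.mem_coe, hS] at this; exact this
    exact hJ.ne_top (aux_eq_top v hv_mul hv_one hv_zero S hS hx (le_antisymm h hx0))
  exact hJ.eq_of_le (aux_M_maximal v hv_mul hv_add hv_one hv_zero S hS).ne_top hle

end M
section Impl
variable {K : Type*} [Semifield K] (v : K → WithTop ℤ)
  (hv_mul : ∀ x y : K, v (x * y) = v x + v y)
  (hv_add : ∀ x y : K, min (v x) (v y) ≤ v (x + y))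
  (hv_one : v 1 = 0)
  (hv_zero : v 0 = ⊤)
  (S : Subsemiring K) (hS : (S : Set K) = {x : K | 0 ≤ v x})

include hv_mul hv_add hv_one hv_zero hS in
lemma impl_2_3 (h2 : ∀ x y : K, v x ≠ v y → v (x + y) = min (v x) (v y))
    (I : Ideal S) (a b : S) (hab : a + b ∈ I) (ha : a ∈ I) : b ∈ I := by
  rcases le_or_gt (v (a : K)) (v (b : K)) with h | h
  · obtain ⟨c, hc⟩ := aux_dvd v hv_mul hv_one hv_zero S hS a b h
    rw [hc]; exact I.mul_mem_right c ha
  · have hmin : v ((a : K) + b) = v (b : K) := by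
      rw [h2 _ _ (ne_of_gt h), min_eq_right h.le]
    have hle : v ((a + b : S) : K) ≤ v (b : K) := by push_cast; rw [hmin]
    obtain ⟨c, hc⟩ := aux_dvd v hv_mul hv_one hv_zero S hS (a + b) b hle
    rw [hc]; exact I.mul_mem_right c hab

include hv_mul hv_add hv_one hv_zero hS in
lemma impl_1_2_half
    (h1 : ∀ J : Ideal S, J.IsMaximal → (∀ J' : Ideal S, J'.IsMaximal → J' = J) →
      ∀ a b : S, a + b ∈ J → a ∈ J → b ∈ J)
    (x y : K) (hlt : v x < v y) : v (x + y) = v x := by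
  have hxt : v x ≠ ⊤ := ne_top_of_lt hlt
  have hx0 : x ≠ 0 := fun h => hxt (h ▸ hv_zero)
  have hmin : v x ≤ v (x + y) := by
    have := hv_add x y; rwa [min_eq_left hlt.le] at this
  by_contra hne
  have hgt : v x < v (x + y) := lt_of_le_of_ne hmin (Ne.symm hne)
  set u := y / x with hu
  have humul : v u + v x = v y := by rw [← hv_mul, div_mul_cancel₀ _ hx0]
  have hupos : 0 < v u := by
    have : 0 + v x < v u + v x := by rw [zero_add, humul]; exact hlt
    exact (WithTop.add_lt_add_iff_right hxt).mp this
  have huS : u ∈ S := by rw [aux_mem_iff v S hS]; exact hupos.le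
  have hu1 : v (u + 1) + v x = v (x + y) := by
    rw [← hv_mul, add_mul, one_mul, div_mul_cancel₀ _ hx0, add_comm]
  have hu1pos : 0 < v (u + 1) := by
    have : 0 + v x < v (u + 1) + v x := by rw [zero_add, hu1]; exact hgt
    exact (WithTop.add_lt_add_iff_right hxt).mp this
  set M := auxM v hv_mul hv_add hv_zero S hS with hM
  have h1' := h1 M (aux_M_maximal v hv_mul hv_add hv_one hv_zero S hS)
    (aux_M_unique v hv_mul hv_add hv_one hv_zero S hS)
    ⟨u, huS⟩ 1 (by rw [aux_mem_M]; push_cast; exact hu1pos)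
    (by rw [aux_mem_M]; exact hupos)
  rw [aux_mem_M] at h1'
  simp only [OneMemClass.coe_one, hv_one, lt_self_iff_false] at h1'

include hv_mul hv_add hv_one hv_zero hS in
lemma impl_1_2
    (h1 : ∀ J : Ideal S, J.IsMaximal → (∀ J' : Ideal S, J'.IsMaximal → J' = J) →
      ∀ a b : S, a + b ∈ J → a ∈ J → b ∈ J)
    (x y : K) (hne : v x ≠ v y) : v (x + y) = min (v x) (v y) := by
  rcases lt_trichotomy (v x) (v y) with h | h | h
  · rw [min_eq_left h.le]
    exact impl_1_2_half v hv_mul hv_add hv_one hv_zero S hS h1 x y h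
  · exact absurd h hne
  · rw [min_eq_right h.le, add_comm]
    exact impl_1_2_half v hv_mul hv_add hv_one hv_zero S hS h1 y x h

end Impl

section Impl42
variable {K : Type*} [Semifield K] (v : K → WithTop ℤ)
  (hv_mul : ∀ x y : K, v (x * y) = v x + v y)
  (hv_add : ∀ x y : K, min (v x) (v y) ≤ v (x + y))
  (hv_one : v 1 = 0)
  (hv_zero : v 0 = ⊤)
  (hsurj : Function.Surjective v)
  (S : Subsemiring K) (hS : (S : Set K) = {x : K | 0 ≤ v x})

include hv_mul hv_add hv_one hv_zero hsurj hS in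
lemma impl_4_2_half
    (h4 : ∀ f g : Polynomial S, contentIdeal (f * g) = contentIdeal f * contentIdeal g)
    (x y : K) (hlt : v x < v y) : v (x + y) = v x := by
  have hxt : v x ≠ ⊤ := ne_top_of_lt hlt
  have hx0 : x ≠ 0 := fun h => hxt (h ▸ hv_zero)
  have hmin : v x ≤ v (x + y) := by
    have := hv_add x y; rwa [min_eq_left hlt.le] at this
  by_contra hne
  have hgt : v x < v (x + y) := lt_of_le_of_ne hmin (Ne.symm hne)
  by_cases hy0 : y = 0
  · rw [hy0, add_zero] at hne; exact hne rfl
  set u := y / x with hudef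
  have hu0 : u ≠ 0 := div_ne_zero hy0 hx0
  have hut : v u ≠ ⊤ := aux_ne_top v hv_mul hv_one hu0
  have humul : v u + v x = v y := by rw [← hv_mul, div_mul_cancel₀ _ hx0]
  have hupos : 0 < v u := by
    have : 0 + v x < v u + v x := by rw [zero_add, humul]; exact hlt
    exact (WithTop.add_lt_add_iff_right hxt).mp this
  have hu1 : v (1 + u) + v x = v (x + y) := by
    rw [← hv_mul, add_mul, one_mul, div_mul_cancel₀ _ hx0]
  have hu1pos : 0 < v (1 + u) := by
    have : 0 + v x < v (1 + u) + v x := by rw [zero_add, hu1]; exact hgt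
    exact (WithTop.add_lt_add_iff_right hxt).mp this
  -- w := u * (1 + u) has v w ≥ 2 and v (1 + w) ≥ 1
  set w := u * (1 + u) with hwdef
  have hvw : (2 : WithTop ℤ) ≤ v w := by
    rw [hwdef, hv_mul]
    have h1 : (0 : WithTop ℤ) + 1 ≤ v u := aux_add_one_le (by simpa using hupos)
    have h2 : (0 : WithTop ℤ) + 1 ≤ v (1 + u) := aux_add_one_le (by simpa using hu1pos)
    rw [zero_add] at h1 h2
    calc (2 : WithTop ℤ) = 1 + 1 := by norm_num
    _ ≤ v u + v (1 + u) := add_le_add h1 h2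
  have hv1w : (1 : WithTop ℤ) ≤ v (1 + w) := by
    have heq : (1 : K) + w = (1 + u) + u * u := by rw [hwdef]; ring
    rw [heq]
    refine le_trans ?_ (hv_add _ _)
    refine le_min (aux_add_one_le (by simpa using hu1pos)) ?_
    rw [hv_mul]
    have h1 : (0 : WithTop ℤ) + 1 ≤ v u := aux_add_one_le (by simpa using hupos)
    rw [zero_add] at h1
    calc (1 : WithTop ℤ) ≤ 1 + 1 := by norm_num
    _ ≤ v u + v u := add_le_add h1 h1
  obtain ⟨π, hπ⟩ := hsurj ((1 : ℤ) : WithTop ℤ)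
  have hπt : v π ≠ ⊤ := by rw [hπ]; exact WithTop.coe_ne_top
  have hπ0 : π ≠ 0 := fun h => hπt (h ▸ hv_zero)
  have hπS : π ∈ S := by rw [aux_mem_iff v S hS, hπ]; exact_mod_cast zero_le_one
  set d := w / π with hddef
  have hdmul : v d + v π = v w := by rw [← hv_mul, div_mul_cancel₀ _ hπ0]
  have hvd : (1 : WithTop ℤ) ≤ v d := by
    have : (1 : WithTop ℤ) + v π ≤ v d + v π := by
      rw [hdmul, hπ]
      calc ((1:ℤ) : WithTop ℤ) + (1:ℤ) = (2 : WithTop ℤ) := by norm_num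
      _ ≤ v w := hvw
    exact (WithTop.add_le_add_iff_right hπt).mp this
  have hdS : d ∈ S := by
    rw [aux_mem_iff v S hS]; exact le_trans (by norm_num) hvd
  -- construct the polynomials
  set A : S := ⟨π, hπS⟩ with hA
  set D : S := ⟨d, hdS⟩ with hD
  have hAD : (((A * D : S)) : K) = w := by
    push_cast
    show π * d = w
    rw [hddef, mul_comm, div_mul_cancel₀ _ hπ0]
  set f : Polynomial S := Polynomial.C A + Polynomial.X with hf
  set g : Polynomial S := Polynomial.C 1 + Polynomial.C D * Polynomial.X with hg
  have hfg : f * g = Polynomial.C A + Polynomial.C (A * D + 1) * Polynomial.X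
      + Polynomial.C D * Polynomial.X ^ 2 := by
    rw [hf, hg]; simp only [map_add, map_mul, map_one]; ring
  have h1f : (1 : S) ∈ contentIdeal f := by
    refine Ideal.subset_span ⟨1, ?_⟩
    rw [hf]; simp
  have h1g : (1 : S) ∈ contentIdeal g := by
    refine Ideal.subset_span ⟨0, ?_⟩
    rw [hg]; simp
  have h1fg : (1 : S) ∈ contentIdeal (f * g) := by
    rw [h4]
    simpa using Ideal.mul_mem_mul h1f h1g
  set M := auxM v hv_mul hv_add hv_zero S hS with hM
  have hle : contentIdeal (f * g) ≤ M := by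
    rw [contentIdeal, Ideal.span_le]
    rintro z ⟨n, hn⟩
    rw [hfg] at hn
    have hmem : ∀ s : S, 0 < v (s : K) → s ∈ M := fun s hs => (aux_mem_M v hv_mul hv_add hv_zero S hS s).mpr hs
    match n with
    | 0 =>
      have : z = A := by
        rw [← hn]
        simp [Polynomial.coeff_C, Polynomial.coeff_one]
      refine hmem z ?_
      rw [this, hA]
      simp only [hπ]
      exact_mod_cast zero_lt_one
    | 1 =>
      have hz : z = A * D + 1 := by
        rw [← hn]
        simp [Polynomial.coeff_C, Polynomial.coeff_one]
      have hπd : π * d = w := by rw [hddef, mul_comm, div_mul_cancel₀ _ hπ0]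
      refine hmem z ?_
      have hcoe : ((A * D + 1 : S) : K) = 1 + w := by push_cast; rw [hπd, add_comm]
      rw [hz, hcoe]
      exact lt_of_lt_of_le zero_lt_one hv1w
    | 2 =>
      have : z = D := by
        rw [← hn]
        simp [Polynomial.coeff_C, Polynomial.coeff_one]
      refine hmem z ?_
      rw [this, hD]
      exact lt_of_lt_of_le zero_lt_one hvd
    | (m+3) =>
      have : z = 0 := by
        rw [← hn]
        simp [Polynomial.coeff_C, Polynomial.coeff_X, Polynomial.coeff_one]
      refine hmem z ?_
      rw [this]
      simp [hv_zero]
  have := hle h1fg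
  rw [aux_mem_M] at this
  simp only [OneMemClass.coe_one, hv_one, lt_self_iff_false] at this

include hv_mul hv_add hv_one hv_zero hsurj hS in
lemma impl_4_2
    (h4 : ∀ f g : Polynomial S, contentIdeal (f * g) = contentIdeal f * contentIdeal g)
    (x y : K) (hne : v x ≠ v y) : v (x + y) = min (v x) (v y) := by
  rcases lt_trichotomy (v x) (v y) with h | h | h
  · rw [min_eq_left h.le]
    exact impl_4_2_half v hv_mul hv_add hv_one hv_zero hsurj S hS h4 x y h
  · exact absurd h hne
  · rw [min_eq_right h.le, add_comm]
    exact impl_4_2_half v hv_mul hv_add hv_one hv_zero hsurj S hS h4 y x h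

end Impl42

section Gauss
variable {K : Type*} [Semifield K] (v : K → WithTop ℤ)
  (hv_mul : ∀ x y : K, v (x * y) = v x + v y)
  (hv_add : ∀ x y : K, min (v x) (v y) ≤ v (x + y))
  (hv_one : v 1 = 0)
  (hv_zero : v 0 = ⊤)
  (S : Subsemiring K) (hS : (S : Set K) = {x : K | 0 ≤ v x})

lemma aux_content_zero : contentIdeal (0 : Polynomial S) = ⊥ := by
  have h : {a : S | ∃ n : ℕ, (0 : Polynomial S).coeff n = a} = {0} := by
    ext z; simp [eq_comm]
  rw [contentIdeal, h]
  simp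

include hv_mul hv_one hv_zero in
lemma aux_min_coeff (f : Polynomial S) (hf : f ≠ 0) :
    ∃ i : ℕ, (∀ n, v ↑(f.coeff i) ≤ v ↑(f.coeff n)) ∧
      (∀ p, p < i → v ↑(f.coeff i) < v ↑(f.coeff p)) ∧ v ↑(f.coeff i) ≠ ⊤ := by
  set m := (Finset.range (f.natDegree + 1)).inf (fun n => v ↑(f.coeff n)) with hm
  have hall : ∀ n, m ≤ v ↑(f.coeff n) := by
    intro n
    by_cases hn : n ≤ f.natDegree
    · exact Finset.inf_le (Finset.mem_range.mpr (Nat.lt_succ_of_le hn))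
    · rw [Polynomial.coeff_eq_zero_of_natDegree_lt (not_le.mp hn)]
      simp [hv_zero]
  have hex : ∃ i, v ↑(f.coeff i) = m := by
    obtain ⟨i, -, hi⟩ := Finset.exists_mem_eq_inf (Finset.range (f.natDegree + 1))
      (Finset.nonempty_range_iff.mpr (Nat.succ_ne_zero _)) (fun n => v ↑(f.coeff n))
    exact ⟨i, hi.symm⟩
  have hspec := Nat.find_spec hex
  refine ⟨Nat.find hex, ?_, ?_, ?_⟩
  · intro n; rw [hspec]; exact hall n
  · intro p hp
    have hne := Nat.find_min hex hp
    rw [hspec]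
    exact lt_of_le_of_ne (hall p) (Ne.symm hne)
  · rw [hspec]
    intro htop
    have hc0 : (f.coeff f.natDegree : K) ≠ 0 := by
      rw [ne_eq, ZeroMemClass.coe_eq_zero]
      exact Polynomial.leadingCoeff_ne_zero.mpr hf
    have := hall f.natDegree
    rw [htop, top_le_iff] at this
    exact aux_ne_top v hv_mul hv_one hc0 this

include hv_mul hv_one hv_zero hS in
lemma aux_content_eq_span (f : Polynomial S) (a : S) (ha : ∃ n, f.coeff n = a)
    (hmin : ∀ n, v ↑a ≤ v ↑(f.coeff n)) : contentIdeal f = Ideal.span {a} := by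
  apply le_antisymm
  · rw [contentIdeal, Ideal.span_le]
    rintro z ⟨n, hn⟩
    rw [SetLike.mem_coe, Ideal.mem_span_singleton]
    obtain ⟨c, hc⟩ := aux_dvd v hv_mul hv_one hv_zero S hS a z (hn ▸ hmin n)
    exact ⟨c, hc⟩
  · exact Ideal.span_mono (Set.singleton_subset_iff.mpr ha)

include hv_mul hv_one hv_zero hS in
lemma aux_span_eq (a b : S) (h : v (a : K) = v (b : K)) :
    Ideal.span {a} = Ideal.span ({b} : Set S) := by
  apply le_antisymm <;> rw [Ideal.span_le, Set.singleton_subset_iff, SetLike.mem_coe,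
    Ideal.mem_span_singleton]
  · obtain ⟨c, hc⟩ := aux_dvd v hv_mul hv_one hv_zero S hS b a h.ge
    exact ⟨c, hc⟩
  · obtain ⟨c, hc⟩ := aux_dvd v hv_mul hv_one hv_zero S hS a b h.le
    exact ⟨c, hc⟩

include hv_mul hv_add hv_one hv_zero hS in
lemma impl_2_4 (h2 : ∀ x y : K, v x ≠ v y → v (x + y) = min (v x) (v y))
    (f g : Polynomial S) :
    contentIdeal (f * g) = contentIdeal f * contentIdeal g := by
  by_cases hf : f = 0
  · rw [hf, zero_mul, aux_content_zero]; simp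
  by_cases hg : g = 0
  · rw [hg, mul_zero, aux_content_zero]; simp
  obtain ⟨i, hif, hifs, hift⟩ := aux_min_coeff v hv_mul hv_one hv_zero S f hf
  obtain ⟨j, hjg, hjgs, hjgt⟩ := aux_min_coeff v hv_mul hv_one hv_zero S g hg
  set Vf := v ↑(f.coeff i) with hVf
  set Vg := v ↑(g.coeff j) with hVg
  -- every coefficient of f * g has value at least Vf + Vg
  have hallco : ∀ n, Vf + Vg ≤ v ↑((f * g).coeff n) := by
    intro n
    rw [Polynomial.coeff_mul]
    have hco : ((∑ p ∈ Finset.HasAntidiagonal.antidiagonal n, f.coeff p.1 * g.coeff p.2 : S) : K)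
        = ∑ p ∈ Finset.HasAntidiagonal.antidiagonal n, ((f.coeff p.1 : K) * (g.coeff p.2 : K)) := by
      push_cast; rfl
    rw [hco]
    refine aux_sum_le v hv_add hv_zero _ _ _ ?_
    intro p _
    rw [hv_mul]
    exact add_le_add (hif p.1) (hjg p.2)
  -- the coefficient at i + j has value exactly Vf + Vg
  have hkey : v ↑((f * g).coeff (i + j)) = Vf + Vg := by
    rw [Polynomial.coeff_mul]
    have hmem : ((i, j) : ℕ × ℕ) ∈ Finset.HasAntidiagonal.antidiagonal (i + j) :=
      Finset.HasAntidiagonal.mem_antidiagonal.mpr rfl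
    rw [← Finset.add_sum_erase _ _ hmem]
    set rest : S := ∑ p ∈ (Finset.HasAntidiagonal.antidiagonal (i + j)).erase (i, j),
      f.coeff p.1 * g.coeff p.2 with hrest
    have hVft : Vf + Vg ≠ ⊤ := WithTop.add_ne_top.mpr ⟨hift, hjgt⟩
    have hrestge : Vf + Vg + 1 ≤ v ↑rest := by
      have hco : ((rest : S) : K) = ∑ p ∈ (Finset.HasAntidiagonal.antidiagonal (i + j)).erase (i, j),
          ((f.coeff p.1 : K) * (g.coeff p.2 : K)) := by
        rw [hrest]; push_cast; rfl
      rw [hco]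
      refine aux_sum_le v hv_add hv_zero _ _ _ ?_
      rintro ⟨p, q⟩ hp
      have hpq : p + q = i + j := Finset.HasAntidiagonal.mem_antidiagonal.mp (Finset.mem_of_mem_erase hp)
      have hne : (p, q) ≠ (i, j) := Finset.ne_of_mem_erase hp
      rw [hv_mul]
      rcases lt_trichotomy p i with h | h | h
      · have h1 : Vf + 1 ≤ v ↑(f.coeff p) := aux_add_one_le (hifs p h)
        calc Vf + Vg + 1 = (Vf + 1) + Vg := add_right_comm Vf Vg 1
        _ ≤ v ↑(f.coeff p) + v ↑(g.coeff q) := add_le_add h1 (hjg q)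
      · exfalso
        apply hne
        have hq : q = j := by omega
        rw [h, hq]
      · have hq : q < j := by omega
        have h1 : Vg + 1 ≤ v ↑(g.coeff q) := aux_add_one_le (hjgs q hq)
        calc Vf + Vg + 1 = Vf + (Vg + 1) := add_assoc Vf Vg 1
        _ ≤ v ↑(f.coeff p) + v ↑(g.coeff q) := add_le_add (hif p) h1
    have hterm : v ((f.coeff i : K) * (g.coeff j : K)) = Vf + Vg := by
      rw [hv_mul]
    have hco2 : ((f.coeff i * g.coeff j + rest : S) : K)
        = (f.coeff i : K) * (g.coeff j : K) + (rest : K) := by push_cast; rfl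
    rw [hco2]
    have hltrest : v ((f.coeff i : K) * (g.coeff j : K)) < v (rest : K) := by
      rw [hterm]
      exact lt_of_lt_of_le (aux_lt_add_one hVft) hrestge
    rw [h2 _ _ (ne_of_lt hltrest), min_eq_left hltrest.le, hterm]
  -- assemble
  have hcfg : contentIdeal (f * g) = Ideal.span {(f * g).coeff (i + j)} := by
    refine aux_content_eq_span v hv_mul hv_one hv_zero S hS _ _ ⟨i + j, rfl⟩ ?_
    intro n
    rw [hkey]
    exact hallco n
  have hcf : contentIdeal f = Ideal.span {f.coeff i} :=
    aux_content_eq_span v hv_mul hv_one hv_zero S hS _ _ ⟨i, rfl⟩ hif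
  have hcg : contentIdeal g = Ideal.span {g.coeff j} :=
    aux_content_eq_span v hv_mul hv_one hv_zero S hS _ _ ⟨j, rfl⟩ hjg
  rw [hcfg, hcf, hcg, Ideal.span_singleton_mul_span_singleton]
  refine aux_span_eq v hv_mul hv_one hv_zero S hS _ _ ?_
  rw [hkey]
  push_cast
  rw [hv_mul]

end Gauss

/-- For a discrete valuation semiring `S = {x ∈ K | v x ≥ 0}`
(`v` a surjective `ℤ`-valuation on the semifield `K ≅ F(S)`), TFAE:
(1) the unique maximal ideal of `S` is subtractive; (2) `v` satisfies the
min-property; (3) every ideal of `S` is subtractive; (4) `S` is a Gaussian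
semiring. -/
theorem stmt_19 {K : Type*} [Semifield K]
    (v : K → WithTop ℤ)
    (hv_mul : ∀ x y : K, v (x * y) = v x + v y)
    (hv_add : ∀ x y : K, min (v x) (v y) ≤ v (x + y))
    (hv_one : v 1 = 0)
    (hv_zero : v 0 = ⊤)
    (hsurj : Function.Surjective v)
    (S : Subsemiring K) (hS : (S : Set K) = {x : K | 0 ≤ v x}) :
    List.TFAE
      [ -- (1) the unique maximal ideal of `S` is subtractive:
        ∀ J : Ideal S, J.IsMaximal → (∀ J' : Ideal S, J'.IsMaximal → J' = J) →
          ∀ a b : S, a + b ∈ J → a ∈ J → b ∈ J,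
        -- (2) the valuation map satisfies the min-property:
        ∀ x y : K, v x ≠ v y → v (x + y) = min (v x) (v y),
        -- (3) every ideal of `S` is subtractive:
        ∀ I : Ideal S, ∀ a b : S, a + b ∈ I → a ∈ I → b ∈ I,
        -- (4) `S` is a Gaussian semiring:
        ∀ f g : Polynomial S, contentIdeal (f * g) = contentIdeal f * contentIdeal g ] := by

  tfae_have 1 → 2 := impl_1_2 v hv_mul hv_add hv_one hv_zero S hS
  tfae_have 2 → 3 := fun h2 I a b hab ha =>
    impl_2_3 v hv_mul hv_add hv_one hv_zero S hS h2 I a b hab ha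
  tfae_have 3 → 1 := fun h3 J _ _ => h3 J
  tfae_have 2 → 4 := impl_2_4 v hv_mul hv_add hv_one hv_zero S hS
  tfae_have 4 → 2 := impl_4_2 v hv_mul hv_add hv_one hv_zero hsurj S hS
  tfae_finish
end
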